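/- Let (V,H,G) be a hypergram, let α be an n-qubit Pauli assignment of (V,H,G) with contextuality degree d, and let α' be any n'-qubit Pauli assignment of (V,H,G). Then the noncontextual bounds coincide: |H| − 2d' = |H| − 2d, where d' is the contextuality degree of α'; i.e., all Pauli assignments of (V,H,G) have the same noncontextual bound b = |H| − 2d. -/

import Mathlib

open scoped Classical
open Matrix

noncomputable section

/-- The space of `n`-qubit operators, realized as matrices indexed by
`Fin n → Fin 2` (the `n`-fold tensor-product index). -/
abbrev QMat (n : ℕ) := Matrix (Fin n → Fin 2) (Fin n → Fin 2) ℂ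

/-- The four Pauli matrices `I, X, Y, Z`. -/
def pauliMat : Fin 4 → Matrix (Fin 2) (Fin 2) ℂ
  | ⟨0, _⟩ => 1
  | ⟨1, _⟩ => !![0, 1; 1, 0]
  | ⟨2, _⟩ => !![0, -Complex.I; Complex.I, 0]
  | ⟨3, _⟩ => !![1, 0; 0, -1]

/-- The `n`-fold Kronecker (tensor) product `G₁ ⊗ ⋯ ⊗ Gₙ` of the Pauli matrices
selected by `g : Fin n → Fin 4`, as a matrix indexed by `Fin n → Fin 2`. -/
def nPauli {n : ℕ} (g : Fin n → Fin 4) : QMat n :=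
  Matrix.of fun r c => ∏ k, pauliMat (g k) (r k) (c k)

/-- `M` is an `n`-qubit Pauli observable. -/
def IsPauliObs (n : ℕ) (M : QMat n) : Prop := ∃ g : Fin n → Fin 4, M = nPauli g

/-- `I^⊗n`, the `n`-fold tensor product of the identity. -/
def idN (n : ℕ) : QMat n := nPauli (fun _ => ⟨0, by omega⟩)

/-- Product of `f` over a finite set of naturals, taken in increasing order
(well-defined without commutativity; agrees with the unordered product when the
factors pairwise commute). -/
def natFinsetProd {M : Type*} [Monoid M] (s : Finset ℕ) (f : ℕ → M) : M :=
  ((s.sort (· ≤ ·)).map f).prod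

/-- `(V,H,G)` is a hypergram: `V` a nonempty finite vertex set, `H` a set of
nonempty hyperedges covering `V`, `G` a set of 2-element edges on `V` forming a
simple reduced graph, no edge of `G` being contained in a hyperedge of `H`. -/
def IsHypergram (V : Finset ℕ) (H G : Finset (Finset ℕ)) : Prop :=
  V.Nonempty ∧
  (∀ h ∈ H, h ⊆ V ∧ h.Nonempty) ∧
  (∀ v ∈ V, ∃ h ∈ H, v ∈ h) ∧
  (∀ e ∈ G, e ⊆ V ∧ e.card = 2) ∧
  (∀ v ∈ V, ∃ e ∈ G, v ∈ e) ∧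
  (∀ v ∈ V, ∀ w ∈ V,
    (∀ u ∈ V, (({v, u} : Finset ℕ) ∈ G ↔ ({w, u} : Finset ℕ) ∈ G)) → v = w) ∧
  (∀ e ∈ G, ∀ h ∈ H, ¬ e ⊆ h)

/-- `α` is an `n`-qubit Pauli assignment of the hypergram `(V,H,G)`. -/
def IsPauliAssignment (V : Finset ℕ) (H G : Finset (Finset ℕ)) (n : ℕ)
    (α : ℕ → QMat n) : Prop :=
  (∀ v ∈ V, IsPauliObs n (α v)) ∧
  (∀ v ∈ V, α v ≠ idN n) ∧
  (∀ v₁ ∈ V, ∀ v₂ ∈ V, α v₁ = α v₂ → v₁ = v₂) ∧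
  (∀ v₁ ∈ V, ∀ v₂ ∈ V, v₁ ≠ v₂ →
    (α v₁ * α v₂ = -(α v₂ * α v₁) ↔ ({v₁, v₂} : Finset ℕ) ∈ G)) ∧
  (∀ h ∈ H, natFinsetProd h α = idN n ∨ natFinsetProd h α = -(idN n))

/-- The sign `sgn_α(h) ∈ {−1,1}` of a hyperedge `h`: `∏_{v∈h} α(v) = sgn_α(h)·I^⊗n`. -/
def quantumSgn {n : ℕ} (α : ℕ → QMat n) (h : Finset ℕ) : ℤ :=
  if natFinsetProd h α = idN n then 1 else -1

/-- The sign `sgn_a(h) = ∏_{v∈h} a(v)` of a hyperedge for a classical assignment. -/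
def classicalSgn (a : ℕ → ℤ) (h : Finset ℕ) : ℤ := ∏ v ∈ h, a v

/-- The contextuality degree of a Pauli assignment: the minimum over classical
assignments `a : V → {−1,1}` of the number of hyperedges whose signs differ. -/
def contextualityDegree {n : ℕ} (H : Finset (Finset ℕ)) (α : ℕ → QMat n) : ℕ :=
  sInf { d : ℕ | ∃ a : ℕ → ℤ, (∀ v, a v = 1 ∨ a v = -1) ∧
    d = (H.filter (fun h => quantumSgn α h ≠ classicalSgn a h)).card }

/-- The context (incidence) matrix of a hypergram over 𝔽₂. -/
def contextMatrix (V : Finset ℕ) (H : Finset (Finset ℕ)) :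
    Matrix {h // h ∈ H} {v // v ∈ V} (ZMod 2) :=
  Matrix.of fun h v => if v.1 ∈ h.1 then 1 else 0

/-- The anticommutation (adjacency) matrix of a hypergram over 𝔽₂. -/
def anticommMatrix (V : Finset ℕ) (G : Finset (Finset ℕ)) :
    Matrix {v // v ∈ V} {v // v ∈ V} (ZMod 2) :=
  Matrix.of fun i j => if ({i.1, j.1} : Finset ℕ) ∈ G then 1 else 0

/-- The standard symplectic form on `𝔽₂^{2n}`:
`⟨x,y⟩ = Σ_{k=1}^{n} (x_{2k−1} y_{2k} + x_{2k} y_{2k−1})`. -/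
def sympForm (n : ℕ) (x y : Fin (2 * n) → ZMod 2) : ZMod 2 :=
  ∑ k : Fin n,
    (x ⟨2 * k.1, by have := k.2; omega⟩ * y ⟨2 * k.1 + 1, by have := k.2; omega⟩ +
     x ⟨2 * k.1 + 1, by have := k.2; omega⟩ * y ⟨2 * k.1, by have := k.2; omega⟩)

/-- The single-qubit encoding `ψ(I)=(0,0), ψ(X)=(0,1), ψ(Y)=(1,1), ψ(Z)=(1,0)`. -/
def psi4 : Fin 4 → (ZMod 2) × (ZMod 2)
  | ⟨0, _⟩ => (0, 0)
  | ⟨1, _⟩ => (0, 1)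
  | ⟨2, _⟩ => (1, 1)
  | ⟨3, _⟩ => (1, 0)

/-- The encoding `ψ` of an `n`-qubit Pauli observable (given by its tensor
factors `g`) as a vector of `𝔽₂^{2n}`, concatenating the per-factor encodings. -/
def psiVec {n : ℕ} (g : Fin n → Fin 4) : Fin (2 * n) → ZMod 2 := fun idx =>
  if idx.1 % 2 = 0 then (psi4 (g ⟨idx.1 / 2, by have := idx.2; omega⟩)).1
  else (psi4 (g ⟨idx.1 / 2, by have := idx.2; omega⟩)).2

/-- All pairs of elements of `S` commute. -/
def PairComm {n : ℕ} (S : Finset (QMat n)) : Prop := ∀ a ∈ S, ∀ b ∈ S, a * b = b * a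

/-- The (well-defined) product of a finite set of pairwise commuting matrices. -/
def commProd {n : ℕ} (S : Finset (QMat n)) (h : PairComm S) : QMat n :=
  S.noncommProd id (fun a ha b hb _ => h a ha b hb)

/-- Pairwise commutation is inherited by subsets. -/
def pairCommOfSubset {n : ℕ} {S T : Finset (QMat n)} (hST : S ⊆ T) (h : PairComm T) :
    PairComm S := fun a ha b hb => h a (hST ha) b (hST hb)

/-- `Q` (pairwise commuting) is independent: no nonempty subset has product `±I^⊗n`. -/
def IsIndep {n : ℕ} (Q : Finset (QMat n)) (hQ : PairComm Q) : Prop :=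
  ∀ S : Finset (QMat n), ∀ (hS : S ⊆ Q), S.Nonempty →
    commProd S (pairCommOfSubset hS hQ) ≠ idN n ∧
    commProd S (pairCommOfSubset hS hQ) ≠ -(idN n)

/-- The vertex set `{1, …, 15}`. -/
def V15 : Finset ℕ := Finset.Icc 1 15

/-- The 15 lines of the doily. -/
def doilyLines : Finset (Finset ℕ) :=
  { {1,2,3}, {1,8,9}, {1,10,11}, {2,4,6}, {2,5,7}, {3,12,15}, {3,13,14},
    {4,8,12}, {4,10,14}, {5,8,13}, {5,10,15}, {6,9,15}, {6,11,13},
    {7,9,14}, {7,11,12} }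

/-- The 10 lines of the two-spread `H_{2s}`. -/
def twoSpreadLines : Finset (Finset ℕ) :=
  { {1,2,3}, {1,10,11}, {2,4,6}, {3,13,14}, {4,8,12}, {5,8,13}, {5,10,15},
    {6,9,15}, {7,9,14}, {7,11,12} }

/-- The anticommutation graph `G_d = G_{2s}`: pairs of distinct vertices not on a
common doily line. -/
def doilyG : Finset (Finset ℕ) :=
  (V15.powersetCard 2).filter (fun e => ∀ h ∈ doilyLines, ¬ e ⊆ h)

/-!
Tensoring the two assignments gives the family `v ↦ α v ⊗ α' v` of involutions, which pairwise
commute because two vertices anticommute under `α` exactly when they anticommute under `α'`;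
its product over a hyperedge `h` is `sgn_α(h) sgn_α'(h) · I`. The eigenvalues `b v = ±1` of the
`α v ⊗ α' v` on a common eigenvector show that `sgn_α · sgn_α'` is the sign function of the
classical assignment `b`. Then `a ↦ a b` is a bijection of classical assignments matching the
hyperedges where `α'` disagrees with `a` with those where `α` disagrees with `a b`, so the two
contextuality degrees are equal.
-/

open Kronecker

lemma pauliMat_mul_self (a : Fin 4) : pauliMat a * pauliMat a = 1 := by
  fin_cases a <;> simp [pauliMat, Matrix.one_fin_two]

lemma pauliMat_comm_or_anticomm (a b : Fin 4) :
    pauliMat b * pauliMat a = pauliMat a * pauliMat b ∨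
      pauliMat b * pauliMat a = -(pauliMat a * pauliMat b) := by
  fin_cases a <;> fin_cases b <;> simp [pauliMat, Matrix.one_fin_two]

lemma idN_eq_one (n : ℕ) : idN n = 1 := by
  ext r c
  by_cases hrc : r = c
  · subst hrc
    simp [idN, nPauli, pauliMat]
  · obtain ⟨k, hk⟩ := Function.ne_iff.mp hrc
    rw [Matrix.one_apply_ne hrc]
    exact Finset.prod_eq_zero (Finset.mem_univ k) (Matrix.one_apply_ne hk)

lemma nPauli_mul {n : ℕ} (g g' : Fin n → Fin 4) :
    nPauli g * nPauli g' =
      Matrix.of fun r c => ∏ k, (pauliMat (g k) * pauliMat (g' k)) (r k) (c k) := by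
  ext r c
  simp only [Matrix.mul_apply, nPauli, Matrix.of_apply, ← Finset.prod_mul_distrib]
  rw [Finset.prod_univ_sum, Fintype.piFinset_univ]

lemma nPauli_mul_self {n : ℕ} (g : Fin n → Fin 4) : nPauli g * nPauli g = 1 := by
  rw [nPauli_mul, ← idN_eq_one]
  simp only [pauliMat_mul_self]
  rfl

lemma nPauli_mul_eq_smul {n : ℕ} (g g' : Fin n → Fin 4) (ε : Fin n → ℂ)
    (hε : ∀ k, pauliMat (g' k) * pauliMat (g k) = ε k • (pauliMat (g k) * pauliMat (g' k))) :
    nPauli g' * nPauli g = (∏ k, ε k) • (nPauli g * nPauli g') := by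
  ext r c
  simp only [nPauli_mul, hε, Matrix.of_apply, Matrix.smul_apply, smul_eq_mul,
    Finset.prod_mul_distrib]

lemma nPauli_comm_or_anticomm {n : ℕ} (g g' : Fin n → Fin 4) :
    nPauli g' * nPauli g = nPauli g * nPauli g' ∨
      nPauli g' * nPauli g = -(nPauli g * nPauli g') := by
  have hsign : ∀ k, ∃ ε : ℂ, (ε = 1 ∨ ε = -1) ∧
      pauliMat (g' k) * pauliMat (g k) = ε • (pauliMat (g k) * pauliMat (g' k)) := fun k => by
    rcases pauliMat_comm_or_anticomm (g k) (g' k) with h | h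
    · exact ⟨1, Or.inl rfl, by rw [h, one_smul]⟩
    · exact ⟨-1, Or.inr rfl, by rw [h, neg_one_smul]⟩
  choose ε hε₁ hε₂ using hsign
  have hprod : (∏ k, ε k) = 1 ∨ (∏ k, ε k) = -1 :=
    Finset.prod_induction ε (fun x => x = 1 ∨ x = -1)
      (by rintro _ _ (rfl | rfl) (rfl | rfl) <;> simp) (Or.inl rfl) fun k _ => hε₁ k
  rw [nPauli_mul_eq_smul g g' ε hε₂]
  rcases hprod with h | h <;> simp [h]

lemma map_natFinsetProd {M N F : Type*} [Monoid M] [Monoid N] [FunLike F M N]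
    [MonoidHomClass F M N] (φ : F) (s : Finset ℕ) (f : ℕ → M) :
    φ (natFinsetProd s f) = natFinsetProd s (fun v => φ (f v)) := by
  simp only [natFinsetProd, map_list_prod, List.map_map, Function.comp_def]

lemma natFinsetProd_eq_prod {M : Type*} [CommMonoid M] (s : Finset ℕ) (f : ℕ → M) :
    natFinsetProd s f = ∏ v ∈ s, f v := by
  rw [natFinsetProd, Finset.prod_eq_multiset_prod, ← Finset.sort_eq (s := s) (r := (· ≤ ·)),
    Multiset.map_coe, Multiset.prod_coe]

lemma natFinsetProd_kronecker {R l m : Type*} [CommSemiring R] [Fintype l] [Fintype m]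
    [DecidableEq l] [DecidableEq m] (s : Finset ℕ) (A : ℕ → Matrix l l R)
    (B : ℕ → Matrix m m R) :
    natFinsetProd s (fun v => A v ⊗ₖ B v) = natFinsetProd s A ⊗ₖ natFinsetProd s B := by
  unfold natFinsetProd
  induction s.sort (· ≤ ·) with
  | nil => simp
  | cons v l ih => simp only [List.map_cons, List.prod_cons, ih, Matrix.mul_kronecker_mul]

lemma Module.End.natFinsetProd_apply_of_forall_eq_smul {K M : Type*} [CommSemiring K]
    [AddCommMonoid M] [Module K M] (f : ℕ → Module.End K M) (c : ℕ → K) {s : Finset ℕ}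
    {u : M} (hu : ∀ v ∈ s, f v u = c v • u) :
    natFinsetProd s f u = (∏ v ∈ s, c v) • u := by
  rw [← natFinsetProd_eq_prod]
  unfold natFinsetProd
  have hl : ∀ v ∈ s.sort (· ≤ ·), f v u = c v • u := fun v hv =>
    hu v ((Finset.mem_sort _).mp hv)
  generalize s.sort (· ≤ ·) = l at hl ⊢
  induction l with
  | nil => simp
  | cons v l ih =>
    simp only [List.map_cons, List.prod_cons, Module.End.mul_apply, List.forall_mem_cons] at hl ⊢
    rw [ih hl.2, map_smul, hl.1, smul_smul, mul_comm]

lemma Commute.kronecker {R l m : Type*} [CommSemiring R] [Fintype l] [Fintype m]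
    {A B : Matrix l l R} {A' B' : Matrix m m R} (h : Commute A B) (h' : Commute A' B') :
    Commute (A ⊗ₖ A') (B ⊗ₖ B') := by
  rw [Commute, SemiconjBy, ← Matrix.mul_kronecker_mul, ← Matrix.mul_kronecker_mul, h.eq, h'.eq]

lemma Matrix.commute_kronecker_of_anticommute {R l m : Type*} [CommRing R] [Fintype l]
    [Fintype m] {A B : Matrix l l R} {A' B' : Matrix m m R} (h : A * B = -(B * A))
    (h' : A' * B' = -(B' * A')) : Commute (A ⊗ₖ A') (B ⊗ₖ B') := by
  rw [Commute, SemiconjBy, ← Matrix.mul_kronecker_mul, ← Matrix.mul_kronecker_mul, h, h']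
  ext ⟨i, i'⟩ ⟨j, j'⟩
  simp

theorem Module.End.exists_common_eigenvector_of_commuting_involutions {K M ι : Type*} [Field K]
    [NeZero (2 : K)] [AddCommGroup M] [Module K M] [Nontrivial M] (f : ι → Module.End K M)
    (S : Finset ι) (hcomm : ∀ i ∈ S, ∀ j ∈ S, Commute (f i) (f j))
    (hsq : ∀ i ∈ S, f i * f i = 1) :
    ∃ u : M, u ≠ 0 ∧ ∀ i ∈ S, f i u = u ∨ f i u = -u := by
  induction S using Finset.induction_on with
  | empty => simpa using exists_ne (0 : M)
  | @insert i S _ ih =>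
    obtain ⟨u, hu, hSu⟩ := ih (fun j hj k hk => hcomm j (by simp [hj]) k (by simp [hk]))
      (fun j hj => hsq j (by simp [hj]))
    have hii : f i (f i u) = u := by
      rw [← Module.End.mul_apply, hsq i (by simp), Module.End.one_apply]
    -- `u + ε • f i u` (`ε = ±1`) is an eigenvector of `f i`, and of each `f j` since they commute.
    have heigen : ∀ ε : K, ε * ε = 1 → ∀ j ∈ insert i S,
        f j (u + ε • f i u) = u + ε • f i u ∨ f j (u + ε • f i u) = -(u + ε • f i u) := by
      intro ε hε j hj
      rcases Finset.mem_insert.mp hj with rfl | hj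
      · have hfj : f j (u + ε • f j u) = ε • (u + ε • f j u) := by
          rw [map_add, map_smul, hii, smul_add, smul_smul, hε, one_smul, add_comm]
        rcases mul_self_eq_one_iff.mp hε with rfl | rfl
        · exact .inl (by rw [hfj, one_smul])
        · exact .inr (by rw [hfj, neg_one_smul])
      · have hji : f j (f i u) = f i (f j u) := by
          rw [← Module.End.mul_apply, ← (hcomm i (by simp) j (by simp [hj])).eq,
            Module.End.mul_apply]
        rcases hSu j hj with h | h <;> simp [hji, h, add_comm]
    have hsum : (u + (1 : K) • f i u) + (u + (-1 : K) • f i u) = (2 : K) • u := by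
      rw [two_smul]; simp only [one_smul, neg_one_smul]; abel
    by_cases h₁ : u + (1 : K) • f i u = 0
    · refine ⟨_, fun h₂ => hu ?_, heigen (-1) (by norm_num)⟩
      rw [h₁, h₂, add_zero, eq_comm, smul_eq_zero] at hsum
      exact hsum.resolve_left two_ne_zero
    · exact ⟨_, h₁, heigen 1 (one_mul 1)⟩

theorem exists_classicalSgn_eq_of_commuting_involutions {K M : Type*} [Field K] [CharZero K]
    [AddCommGroup M] [Module K M] [Nontrivial M] (f : ℕ → Module.End K M) {V : Finset ℕ}
    {H : Finset (Finset ℕ)} (hHV : ∀ h ∈ H, h ⊆ V)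
    (hcomm : ∀ v ∈ V, ∀ w ∈ V, Commute (f v) (f w)) (hsq : ∀ v ∈ V, f v * f v = 1)
    (σ : Finset ℕ → ℤ) (hσ : ∀ h ∈ H, natFinsetProd h f = (σ h : K) • 1) :
    ∃ b : ℕ → ℤ, (∀ v, b v = 1 ∨ b v = -1) ∧ ∀ h ∈ H, σ h = classicalSgn b h := by
  obtain ⟨u, hu, hVu⟩ :=
    Module.End.exists_common_eigenvector_of_commuting_involutions f V hcomm hsq
  set b : ℕ → ℤ := fun v => if f v u = u then 1 else -1
  refine ⟨b, fun v => by by_cases huv : f v u = u <;> simp [b, huv], fun h hh => ?_⟩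
  have hbu : ∀ v ∈ h, f v u = (b v : K) • u := fun v hv => by
    by_cases huv : f v u = u
    · simp [b, huv]
    · simpa [b, huv] using hVu v (hHV h hh hv)
  have hσu := congrArg (· u) (hσ h hh)
  simp only [Module.End.natFinsetProd_apply_of_forall_eq_smul f _ hbu, LinearMap.smul_apply,
    Module.End.one_apply] at hσu
  rw [classicalSgn, ← Int.cast_inj (α := K), Int.cast_prod]
  exact (smul_left_injective K hu hσu).symm

lemma classicalSgn_mul (a b : ℕ → ℤ) (h : Finset ℕ) :
    classicalSgn (a * b) h = classicalSgn a h * classicalSgn b h :=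
  Finset.prod_mul_distrib

lemma classicalSgn_mul_self {b : ℕ → ℤ} (hb : ∀ v, b v = 1 ∨ b v = -1) (h : Finset ℕ) :
    classicalSgn b h * classicalSgn b h = 1 := by
  rw [← classicalSgn_mul]
  exact Finset.prod_eq_one fun v _ => by rcases hb v with hv | hv <;> simp [hv]

lemma card_filter_ne_classicalSgn_mul {H : Finset (Finset ℕ)} {σ σ' : Finset ℕ → ℤ}
    {b : ℕ → ℤ} (hb : ∀ v, b v = 1 ∨ b v = -1)
    (hσ : ∀ h ∈ H, σ' h = σ h * classicalSgn b h) (a : ℕ → ℤ) :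
    (H.filter fun h => σ' h ≠ classicalSgn a h).card =
      (H.filter fun h => σ h ≠ classicalSgn (a * b) h).card := by
  congr 1
  refine Finset.filter_congr fun h hh => not_congr ?_
  rw [hσ h hh, classicalSgn_mul]
  constructor <;> intro heq
  · rw [← heq, mul_assoc, classicalSgn_mul_self hb, mul_one]
  · rw [heq, mul_assoc, classicalSgn_mul_self hb, mul_one]

theorem contextualityDegree_eq_of_quantumSgn_eq_mul {n n' : ℕ} {H : Finset (Finset ℕ)}
    {α : ℕ → QMat n} {α' : ℕ → QMat n'} {b : ℕ → ℤ} (hb : ∀ v, b v = 1 ∨ b v = -1)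
    (hσ : ∀ h ∈ H, quantumSgn α' h = quantumSgn α h * classicalSgn b h) :
    contextualityDegree H α' = contextualityDegree H α := by
  have hpm : ∀ a : ℕ → ℤ, (∀ v, a v = 1 ∨ a v = -1) → ∀ v, (a * b) v = 1 ∨ (a * b) v = -1 :=
    fun a ha v => by rcases ha v with h | h <;> rcases hb v with h' | h' <;> simp [h, h']
  have hbb : b * b = 1 := funext fun v => by rcases hb v with h | h <;> simp [h]
  unfold contextualityDegree
  congr 1
  ext d
  constructor
  · rintro ⟨a, ha, rfl⟩
    exact ⟨a * b, hpm a ha, card_filter_ne_classicalSgn_mul hb hσ a⟩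
  · rintro ⟨a, ha, rfl⟩
    refine ⟨a * b, hpm a ha, ?_⟩
    rw [card_filter_ne_classicalSgn_mul hb hσ, mul_assoc, hbb, mul_one]

lemma quantumSgn_mul_self {n : ℕ} (α : ℕ → QMat n) (h : Finset ℕ) :
    quantumSgn α h * quantumSgn α h = 1 := by
  unfold quantumSgn
  split_ifs <;> norm_num

namespace IsPauliAssignment

variable {V : Finset ℕ} {H G : Finset (Finset ℕ)} {n : ℕ} {α : ℕ → QMat n}

lemma mul_self (hα : IsPauliAssignment V H G n α) {v : ℕ} (hv : v ∈ V) : α v * α v = 1 := by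
  obtain ⟨g, hg⟩ := hα.1 v hv
  rw [hg, nPauli_mul_self]

lemma commute_of_not_mem (hα : IsPauliAssignment V H G n α) {v w : ℕ} (hv : v ∈ V)
    (hw : w ∈ V) (hvw : v ≠ w) (hG : ({v, w} : Finset ℕ) ∉ G) : Commute (α v) (α w) := by
  obtain ⟨g, hg⟩ := hα.1 v hv
  obtain ⟨g', hg'⟩ := hα.1 w hw
  rcases nPauli_comm_or_anticomm g' g with hc | hc
  · rw [Commute, SemiconjBy, hg, hg', hc]
  · exact absurd ((hα.2.2.2.1 v hv w hw hvw).mp (by rw [hg, hg', hc])) hG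

lemma natFinsetProd_eq_smul_one (hα : IsPauliAssignment V H G n α) {h : Finset ℕ}
    (hh : h ∈ H) : natFinsetProd h α = (quantumSgn α h : ℂ) • 1 := by
  unfold quantumSgn
  split_ifs with h₁
  · rw [h₁, idN_eq_one, Int.cast_one, one_smul]
  · rw [(hα.2.2.2.2 h hh).resolve_left h₁, idN_eq_one, Int.cast_neg, Int.cast_one, neg_one_smul]

lemma commute_kronecker (hα : IsPauliAssignment V H G n α) {n' : ℕ} {α' : ℕ → QMat n'}
    (hα' : IsPauliAssignment V H G n' α') {v w : ℕ} (hv : v ∈ V) (hw : w ∈ V) :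
    Commute (α v ⊗ₖ α' v) (α w ⊗ₖ α' w) := by
  by_cases hvw : v = w
  · rw [hvw]
  by_cases hG : ({v, w} : Finset ℕ) ∈ G
  · exact Matrix.commute_kronecker_of_anticommute ((hα.2.2.2.1 v hv w hw hvw).mpr hG)
      ((hα'.2.2.2.1 v hv w hw hvw).mpr hG)
  · exact Commute.kronecker (hα.commute_of_not_mem hv hw hvw hG)
      (hα'.commute_of_not_mem hv hw hvw hG)

end IsPauliAssignment

/-- All Pauli assignments of a hypergram have the same
noncontextual bound `b = |H| − 2d`. -/
theorem pauli_assignments_same_noncontextual_bound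
    (V : Finset ℕ) (H G : Finset (Finset ℕ)) (hgram : IsHypergram V H G)
    {n n' : ℕ} (α : ℕ → QMat n) (α' : ℕ → QMat n')
    (h₁ : IsPauliAssignment V H G n α) (h₂ : IsPauliAssignment V H G n' α') :
    (H.card : ℤ) - 2 * (contextualityDegree H α' : ℤ) =
    (H.card : ℤ) - 2 * (contextualityDegree H α : ℤ) := by
  set f : ℕ → Module.End ℂ ((Fin n → Fin 2) × (Fin n' → Fin 2) → ℂ) :=
    fun v => Matrix.toLinAlgEquiv' (α v ⊗ₖ α' v)
  have hsq : ∀ v ∈ V, f v * f v = 1 := fun v hv => by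
    simp only [f, ← map_mul, ← Matrix.mul_kronecker_mul, h₁.mul_self hv, h₂.mul_self hv,
      Matrix.one_kronecker_one, map_one]
  have hprod : ∀ h ∈ H,
      natFinsetProd h f = ((quantumSgn α h * quantumSgn α' h : ℤ) : ℂ) • 1 := fun h hh => by
    rw [← map_natFinsetProd, natFinsetProd_kronecker, h₁.natFinsetProd_eq_smul_one hh,
      h₂.natFinsetProd_eq_smul_one hh, Matrix.smul_kronecker, Matrix.kronecker_smul,
      Matrix.one_kronecker_one, smul_smul, map_smul, map_one, Int.cast_mul]
  obtain ⟨b, hb, hbσ⟩ := exists_classicalSgn_eq_of_commuting_involutions f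
    (fun h hh => (hgram.2.1 h hh).1) (fun v hv w hw => (h₁.commute_kronecker h₂ hv hw).map _)
    hsq _ hprod
  rw [contextualityDegree_eq_of_quantumSgn_eq_mul hb fun h hh => by
    rw [← hbσ h hh, ← mul_assoc, quantumSgn_mul_self, one_mul]]

end
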